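/- arXiv:2008.12070 — 2 statements merged into one kernel-verified Lean document; each statement's English description precedes it below -/
import Mathlib

section
/- Law of total linear covariance: Cov[U,W] = Cov[E^A[U|V], E^A[W|V]] + Cov[R^A[U|V], R^A[W|V]], where R^A[X|V] := X − E^A[X|V]. In particular, Cov[U] ≥ Cov[E[U|V]] ≥ Cov[E^A[U|V]] ≥ 0 in the sense of self-adjoint operators. -/
open MeasureTheory

noncomputable section

variable {Ω : Type*} [MeasurableSpace Ω]

/-- The set of (classes of) bounded affine transformations `ω ↦ b + A (V ω)` of `V` in `L²`. -/
def affSet {H G : Type*} [NormedAddCommGroup H] [InnerProductSpace ℝ H]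
    [NormedAddCommGroup G] [InnerProductSpace ℝ G]
    (μ : Measure Ω) (V : Lp H 2 μ) : Set (Lp G 2 μ) :=
  {f | ∃ (b : G) (A : H →L[ℝ] G), (f : Ω → G) =ᵐ[μ] fun ω => b + A (V ω)}

/-- `IsLCE μ U UA V` : `UA` is the linear conditional expectation `E^A[U|V]`, i.e. the
orthogonal projection of `U` in `L²(P;G)` onto the `L²`-closure of the set of bounded affine
transformations of `V`. -/
def IsLCE {H G : Type*} [NormedAddCommGroup H] [InnerProductSpace ℝ H]
    [NormedAddCommGroup G] [InnerProductSpace ℝ G]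
    (μ : Measure Ω) (U UA : Lp G 2 μ) (V : Lp H 2 μ) : Prop :=
  UA ∈ closure (affSet μ V) ∧
  ∀ s ∈ closure (affSet μ V), @inner ℝ _ _ (U - UA) s = (0 : ℝ)

/-- The cross-covariance operator `Cov[X,Y] = E[(X−E X) ⊗ (Y−E Y)]` of `X` and `Y`,
as the map `f ↦ E[⟪Y − E Y, f⟫ • (X − E X)]`. -/
def cov {E F : Type*} [NormedAddCommGroup E] [InnerProductSpace ℝ E] [CompleteSpace E]
    [NormedAddCommGroup F] [InnerProductSpace ℝ F] [CompleteSpace F]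
    (μ : Measure Ω) (X : Ω → E) (Y : Ω → F) : F → E :=
  fun f => ∫ ω, (@inner ℝ _ _ (Y ω - ∫ ω', Y ω' ∂μ) f) • (X ω - ∫ ω', X ω' ∂μ) ∂μ

/-!
Pairing with `f ∈ F` and `g ∈ G` turns `⟪Cov[X,Y] f, g⟫` into the covariance `E[yx] - E[y] E[x]`
of the scalar observables `y = ⟪f, Y⟫`, `x = ⟪g, X⟫`, i.e. into the form
`⟪y, x⟫ - ⟪1, y⟫ ⟪1, x⟫` on `L²(P)`; and `E^A[·|V]` commutes with these pairings, becoming the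
orthogonal projection `P` onto the closure `K` of the affine functions of `V`. As `P` is
self-adjoint and fixes `1 ∈ K`, the form splits into its values on `P x, P y` and on the
residuals `x - P x, y - P y`. The same splitting shows that a projection onto a closed subspace
containing `1` can only decrease the variance. Apply this to `E[·|V]`, the projection onto
`L²(σ(V))`, and to `P = P ∘ E[·|V]`, valid since `K ⊆ L²(σ(V))`: this gives the ordering.
-/

open scoped RealInnerProductSpace
open ProbabilityTheory

section CovForm

variable {E : Type*} [NormedAddCommGroup E] [InnerProductSpace ℝ E]

/-- For `e = 1` in `L²(P)` this is the covariance `E[xy] - E[x] E[y]`. -/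
def covForm (e x y : E) : ℝ := ⟪x, y⟫ - ⟪e, x⟫ * ⟪e, y⟫

lemma covForm_self_nonneg {e : E} (he : ‖e‖ = 1) (x : E) : 0 ≤ covForm e x x := by
  have h := real_inner_mul_inner_self_le e x
  rw [real_inner_self_eq_norm_sq e, he] at h
  unfold covForm
  linarith

variable (K : Submodule ℝ E) [K.HasOrthogonalProjection] {e : E}

lemma Submodule.inner_starProjection_eq_of_mem_left (he : e ∈ K) (x : E) :
    ⟪e, K.starProjection x⟫ = ⟪e, x⟫ := by
  rw [← K.inner_starProjection_left_eq_right, K.starProjection_eq_self_iff.mpr he]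

lemma Submodule.inner_sub_starProjection_eq_zero_of_mem_left (he : e ∈ K) (x : E) :
    ⟪e, x - K.starProjection x⟫ = 0 := by
  rw [inner_sub_right, K.inner_starProjection_eq_of_mem_left he, sub_self]

lemma covForm_eq_covForm_starProjection_add (he : e ∈ K) (x y : E) :
    covForm e x y = covForm e (K.starProjection x) (K.starProjection y)
      + covForm e (x - K.starProjection x) (y - K.starProjection y) := by
  have hxy : ⟪x - K.starProjection x, K.starProjection y⟫ = 0 :=
    K.starProjection_inner_eq_zero x _ (K.starProjection_apply_mem y)
  have hyx : ⟪y - K.starProjection y, K.starProjection x⟫ = 0 :=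
    K.starProjection_inner_eq_zero y _ (K.starProjection_apply_mem x)
  simp only [covForm, K.inner_sub_starProjection_eq_zero_of_mem_left he,
    K.inner_starProjection_eq_of_mem_left he]
  simp only [inner_sub_left, inner_sub_right] at hxy hyx ⊢
  rw [real_inner_comm (K.starProjection x), real_inner_comm (K.starProjection x)] at hyx
  linarith

lemma covForm_starProjection_self_le (he : e ∈ K) (x : E) :
    covForm e (K.starProjection x) (K.starProjection x) ≤ covForm e x x := by
  have h := covForm_eq_covForm_starProjection_add K he x x
  have h₀ : 0 ≤ covForm e (x - K.starProjection x) (x - K.starProjection x) := by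
    simp only [covForm, K.inner_sub_starProjection_eq_zero_of_mem_left he, mul_zero, sub_zero]
    exact real_inner_self_nonneg
  linarith

lemma covForm_starProjection_self_mono {K' : Submodule ℝ E} [K'.HasOrthogonalProjection]
    (hKK' : K ≤ K') (he : e ∈ K) (x : E) :
    covForm e (K.starProjection x) (K.starProjection x) ≤
      covForm e (K'.starProjection x) (K'.starProjection x) := by
  rw [← Submodule.starProjection_comp_starProjection_of_le hKK', ContinuousLinearMap.comp_apply]
  exact covForm_starProjection_self_le K he _

end CovForm

section L2

variable {μ : Measure Ω}
variable {E E' : Type*} [NormedAddCommGroup E] [InnerProductSpace ℝ E]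
  [NormedAddCommGroup E'] [InnerProductSpace ℝ E']

lemma ContinuousLinearMap.compLp_sub {p : ENNReal} [Fact (1 ≤ p)] (L : E →L[ℝ] E')
    (X Y : Lp E p μ) : L.compLp (X - Y) = L.compLp X - L.compLp Y :=
  map_sub (L.compLpL p μ) X Y

variable [CompleteSpace E] [CompleteSpace E']

lemma L2.inner_compLp_left (L : E →L[ℝ] E') (X : Lp E 2 μ) (Y : Lp E' 2 μ) :
    ⟪L.compLp X, Y⟫ = ⟪X, (ContinuousLinearMap.adjoint L).compLp Y⟫ := by
  rw [L2.inner_def, L2.inner_def]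
  refine integral_congr_ae ?_
  filter_upwards [L.coeFn_compLp X, (ContinuousLinearMap.adjoint L).coeFn_compLp Y] with ω hX hY
  rw [hX, hY, ContinuousLinearMap.adjoint_inner_right]

lemma L2.inner_const_one_left [IsFiniteMeasure μ] (x : Lp ℝ 2 μ) :
    ⟪Lp.const 2 μ (1 : ℝ), x⟫ = ∫ ω, x ω ∂μ := by
  rw [← indicatorConstLp_univ, L2.inner_indicatorConstLp_one, setIntegral_univ]

lemma Lp.norm_const_one [IsProbabilityMeasure μ] : ‖Lp.const 2 μ (1 : ℝ)‖ = 1 := by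
  simp [Lp.norm_const]

lemma covariance_congr_ae {X X' Y Y' : Ω → ℝ} (hX : X =ᵐ[μ] X') (hY : Y =ᵐ[μ] Y') :
    cov[X, Y; μ] = cov[X', Y'; μ] := by
  unfold covariance
  rw [integral_congr_ae hX, integral_congr_ae hY]
  refine integral_congr_ae ?_
  filter_upwards [hX, hY] with ω hXω hYω
  rw [hXω, hYω]

lemma covariance_eq_covForm [IsProbabilityMeasure μ] (x y : Lp ℝ 2 μ) :
    cov[x, y; μ] = covForm (Lp.const 2 μ 1) x y := by
  rw [covariance_eq_sub (Lp.memLp x) (Lp.memLp y), covForm, L2.inner_const_one_left,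
    L2.inner_const_one_left, L2.inner_def]
  simp [mul_comm]

lemma cov_congr_ae {X X' : Ω → E} {Y Y' : Ω → E'} (hX : X =ᵐ[μ] X') (hY : Y =ᵐ[μ] Y') :
    cov μ X Y = cov μ X' Y' := by
  funext f
  simp only [cov, integral_congr_ae hX, integral_congr_ae hY]
  refine integral_congr_ae ?_
  filter_upwards [hX, hY] with ω hXω hYω
  rw [hXω, hYω]

lemma inner_cov_apply [IsFiniteMeasure μ] {X : Ω → E} {Y : Ω → E'} (hX : MemLp X 2 μ)
    (hY : MemLp Y 2 μ) (f : E') (e : E) :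
    ⟪cov μ X Y f, e⟫ = cov[fun ω ↦ ⟪f, Y ω⟫, fun ω ↦ ⟪e, X ω⟫; μ] := by
  have hint : Integrable (fun ω ↦ ⟪Y ω - ∫ ω', Y ω' ∂μ, f⟫ • (X ω - ∫ ω', X ω' ∂μ)) μ :=
    memLp_one_iff_integrable.mp <|
      (hX.sub (memLp_const _)).smul (r := 1) ((hY.sub (memLp_const _)).inner_const f)
  rw [cov, real_inner_comm, ← integral_inner hint, covariance,
    integral_inner (hY.integrable one_le_two), integral_inner (hX.integrable one_le_two)]
  refine integral_congr_ae (.of_forall fun ω ↦ ?_)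
  simp only [inner_smul_right, inner_sub_right, real_inner_comm f]

lemma inner_cov_eq_covForm [IsProbabilityMeasure μ] (X : Lp E 2 μ) (Y : Lp E' 2 μ) (f : E')
    (e : E) :
    ⟪cov μ X Y f, e⟫ =
      covForm (Lp.const 2 μ 1) ((innerSL ℝ f).compLp Y) ((innerSL ℝ e).compLp X) := by
  rw [inner_cov_apply (Lp.memLp X) (Lp.memLp Y), ← covariance_eq_covForm]
  exact covariance_congr_ae ((innerSL ℝ f).coeFn_compLp' Y).symm
    ((innerSL ℝ e).coeFn_compLp' X).symm

end L2

section LinearConditionalExpectation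

variable {μ : Measure Ω} {H G G' : Type*} [NormedAddCommGroup H] [InnerProductSpace ℝ H]
  [NormedAddCommGroup G] [InnerProductSpace ℝ G] [NormedAddCommGroup G'] [InnerProductSpace ℝ G']

def affSubmodule (μ : Measure Ω) (V : Lp H 2 μ) (G : Type*) [NormedAddCommGroup G]
    [InnerProductSpace ℝ G] : Submodule ℝ (Lp G 2 μ) where
  carrier := affSet μ V
  zero_mem' := ⟨0, 0, by filter_upwards [Lp.coeFn_zero G 2 μ] with ω h; simpa using h⟩
  add_mem' := by
    rintro X Y ⟨b, A, hX⟩ ⟨c, B, hY⟩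
    refine ⟨b + c, A + B, ?_⟩
    filter_upwards [Lp.coeFn_add X Y, hX, hY] with ω h hXω hYω
    rw [h, Pi.add_apply, hXω, hYω, add_apply]
    abel
  smul_mem' := by
    rintro r X ⟨b, A, hX⟩
    refine ⟨r • b, r • A, ?_⟩
    filter_upwards [Lp.coeFn_smul r X, hX] with ω h hXω
    simp [h, hXω, smul_add]

lemma one_mem_closure_affSubmodule [IsFiniteMeasure μ] (V : Lp H 2 μ) :
    Lp.const 2 μ (1 : ℝ) ∈ (affSubmodule μ V ℝ).topologicalClosure :=
  Submodule.le_topologicalClosure _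
    ⟨1, 0, by filter_upwards [Lp.coeFn_const 2 μ (1 : ℝ)] with ω h; simpa using h⟩

lemma closure_affSubmodule_le_lpMeas [MeasurableSpace H] [BorelSpace H] [CompleteSpace G]
    (V : Lp H 2 μ) :
    (affSubmodule μ V G).topologicalClosure ≤
      lpMeas G ℝ (MeasurableSpace.comap V ‹MeasurableSpace H›) 2 μ := by
  have hm : MeasurableSpace.comap V ‹MeasurableSpace H› ≤ ‹MeasurableSpace Ω› :=
    (Lp.stronglyMeasurable V).measurable.comap_le
  refine Submodule.topologicalClosure_minimal _ ?_ (isClosed_aestronglyMeasurable hm)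
  rintro X ⟨b, A, hX⟩
  have hV : StronglyMeasurable[MeasurableSpace.comap V ‹MeasurableSpace H›] V :=
    stronglyMeasurable_iff_measurable_separable.mpr
      ⟨comap_measurable V, (Lp.stronglyMeasurable V).isSeparable_range⟩
  exact ⟨_, stronglyMeasurable_const.add (A.continuous.comp_stronglyMeasurable hV), hX⟩

lemma compLp_mem_closure_affSet (L : G →L[ℝ] G') {V : Lp H 2 μ} {X : Lp G 2 μ}
    (hX : X ∈ closure (affSet μ V)) : L.compLp X ∈ closure (affSet (G := G') μ V) := by
  refine map_mem_closure (L.compLpL 2 μ).continuous hX ?_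
  rintro Y ⟨b, A, hY⟩
  refine ⟨L b, L.comp A, ?_⟩
  filter_upwards [L.coeFn_compLp Y, hY] with ω h hYω
  rw [h, hYω, map_add, ContinuousLinearMap.comp_apply]

variable [CompleteSpace G] [CompleteSpace G'] {U UA : Lp G 2 μ} {V : Lp H 2 μ}

lemma IsLCE.compLp (h : IsLCE μ U UA V) (L : G →L[ℝ] G') :
    IsLCE μ (L.compLp U) (L.compLp UA) V := by
  refine ⟨compLp_mem_closure_affSet L h.1, fun s hs ↦ ?_⟩
  rw [← L.compLp_sub, L2.inner_compLp_left]
  exact h.2 _ (compLp_mem_closure_affSet _ hs)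

lemma IsLCE.eq_starProjection (h : IsLCE μ U UA V) :
    UA = (affSubmodule μ V G).topologicalClosure.starProjection U :=
  (Submodule.eq_starProjection_of_mem_of_inner_eq_zero h.1 h.2).symm

end LinearConditionalExpectation

lemma compLp_condExpL2_eq_starProjection {α G G' : Type*} {m m₀ : MeasurableSpace α}
    {μ : Measure α} [Fact (m ≤ m₀)] [NormedAddCommGroup G] [InnerProductSpace ℝ G]
    [CompleteSpace G] [NormedAddCommGroup G'] [InnerProductSpace ℝ G'] [CompleteSpace G']
    (L : G →L[ℝ] G') (U : Lp G 2 μ) :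
    L.compLp (condExpL2 G ℝ (Fact.out : m ≤ m₀) U : Lp G 2 μ) =
      (lpMeas G' ℝ m 2 μ).starProjection (L.compLp U) :=
  Lp.ext (condExpL2_comp_continuousLinearMap ℝ ℝ (Fact.out : m ≤ m₀) L U).symm

theorem lce_law_of_total_covariance_general
    (μ : Measure Ω) [IsProbabilityMeasure μ]
    {F G H : Type*}
    [NormedAddCommGroup F] [InnerProductSpace ℝ F] [CompleteSpace F]
    [NormedAddCommGroup G] [InnerProductSpace ℝ G] [CompleteSpace G]
    [NormedAddCommGroup H] [InnerProductSpace ℝ H]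
    [MeasurableSpace H] [BorelSpace H]
    (U UA : Lp G 2 μ) (W WA : Lp F 2 μ) (V : Lp H 2 μ)
    (hUA : IsLCE μ U UA V) (hWA : IsLCE μ W WA V) :
    (∀ f : F, cov μ (U : Ω → G) (W : Ω → F) f =
        cov μ (UA : Ω → G) (WA : Ω → F) f +
        cov μ (fun ω => U ω - UA ω) (fun ω => W ω - WA ω) f) ∧
    (∀ g : G,
      @inner ℝ _ _ (cov μ (U : Ω → G) (U : Ω → G) g) g ≥
        @inner ℝ _ _
          (cov μ (μ[(U : Ω → G) | MeasurableSpace.comap (V : Ω → H) ‹MeasurableSpace H›])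
               (μ[(U : Ω → G) | MeasurableSpace.comap (V : Ω → H) ‹MeasurableSpace H›]) g) g ∧
      @inner ℝ _ _
          (cov μ (μ[(U : Ω → G) | MeasurableSpace.comap (V : Ω → H) ‹MeasurableSpace H›])
               (μ[(U : Ω → G) | MeasurableSpace.comap (V : Ω → H) ‹MeasurableSpace H›]) g) g ≥
        @inner ℝ _ _ (cov μ (UA : Ω → G) (UA : Ω → G) g) g ∧
      @inner ℝ _ _ (cov μ (UA : Ω → G) (UA : Ω → G) g) g ≥ 0) := by
  set K := (affSubmodule μ V ℝ).topologicalClosure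
  have he : Lp.const 2 μ (1 : ℝ) ∈ K := one_mem_closure_affSubmodule V
  have hUK : ∀ g : G, (innerSL ℝ g).compLp UA = K.starProjection ((innerSL ℝ g).compLp U) :=
    fun g ↦ (hUA.compLp (innerSL ℝ g)).eq_starProjection
  refine ⟨fun f ↦ ext_inner_right ℝ fun g ↦ ?_, fun g ↦ ?_⟩
  · have hWK := (hWA.compLp (innerSL ℝ f)).eq_starProjection
    have hsub : cov μ (fun ω ↦ U ω - UA ω) (fun ω ↦ W ω - WA ω) = cov μ ⇑(U - UA) ⇑(W - WA) :=
      cov_congr_ae (Lp.coeFn_sub U UA).symm (Lp.coeFn_sub W WA).symm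
    rw [inner_add_left, hsub]
    simp only [inner_cov_eq_covForm, ContinuousLinearMap.compLp_sub, hUK g, hWK]
    exact covForm_eq_covForm_starProjection_add K he _ _
  · have hm : MeasurableSpace.comap V ‹MeasurableSpace H› ≤ ‹MeasurableSpace Ω› :=
      (Lp.stronglyMeasurable V).measurable.comap_le
    have : Fact _ := ⟨hm⟩
    have hcondExp := ((Lp.memLp U).condExpL2_ae_eq_condExp (𝕜 := ℝ) hm).symm
    rw [Lp.toLp_coeFn] at hcondExp
    rw [cov_congr_ae hcondExp hcondExp, inner_cov_eq_covForm, inner_cov_eq_covForm,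
      inner_cov_eq_covForm, compLp_condExpL2_eq_starProjection, hUK g]
    exact ⟨covForm_starProjection_self_le _ (closure_affSubmodule_le_lpMeas V he) _,
      covForm_starProjection_self_mono K (closure_affSubmodule_le_lpMeas V) he _,
      covForm_self_nonneg Lp.norm_const_one _⟩

/-- Law of total linear covariance:
`Cov[U,W] = Cov[E^A[U|V], E^A[W|V]] + Cov[R^A[U|V], R^A[W|V]]`, and in particular
`Cov[U] ≥ Cov[E[U|V]] ≥ Cov[E^A[U|V]] ≥ 0` in the Loewner order. -/
theorem lce_law_of_total_covariance
    (μ : Measure Ω) [IsProbabilityMeasure μ]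
    {F G H : Type*}
    [NormedAddCommGroup F] [InnerProductSpace ℝ F] [CompleteSpace F] [SecondCountableTopology F]
    [NormedAddCommGroup G] [InnerProductSpace ℝ G] [CompleteSpace G] [SecondCountableTopology G]
    [NormedAddCommGroup H] [InnerProductSpace ℝ H] [CompleteSpace H] [SecondCountableTopology H]
    [MeasurableSpace H] [BorelSpace H]
    (U UA : Lp G 2 μ) (W WA : Lp F 2 μ) (V : Lp H 2 μ)
    (hUA : IsLCE μ U UA V) (hWA : IsLCE μ W WA V) :
    (∀ f : F, cov μ (U : Ω → G) (W : Ω → F) f =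
        cov μ (UA : Ω → G) (WA : Ω → F) f +
        cov μ (fun ω => U ω - UA ω) (fun ω => W ω - WA ω) f) ∧
    (∀ g : G,
      @inner ℝ _ _ (cov μ (U : Ω → G) (U : Ω → G) g) g ≥
        @inner ℝ _ _
          (cov μ (μ[(U : Ω → G) | MeasurableSpace.comap (V : Ω → H) ‹MeasurableSpace H›])
               (μ[(U : Ω → G) | MeasurableSpace.comap (V : Ω → H) ‹MeasurableSpace H›]) g) g ∧
      @inner ℝ _ _
          (cov μ (μ[(U : Ω → G) | MeasurableSpace.comap (V : Ω → H) ‹MeasurableSpace H›])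
               (μ[(U : Ω → G) | MeasurableSpace.comap (V : Ω → H) ‹MeasurableSpace H›]) g) g ≥
        @inner ℝ _ _ (cov μ (UA : Ω → G) (UA : Ω → G) g) g ∧
      @inner ℝ _ _ (cov μ (UA : Ω → G) (UA : Ω → G) g) g ≥ 0) :=
  lce_law_of_total_covariance_general μ U UA W WA V hUA hWA

end
end

section
/- Regularised LCE formula: for every ε > 0, the affine Hilbert–Schmidt map γ_ε(v) := μ_U + C_{UV}(C_V + ε·Id_H)^{-1}(v − μ_V) is the unique minimizer, over all affine maps γ(h) = b + Ah with b ∈ G and A : H→G Hilbert–Schmidt, of the Tikhonov-regularised functional E[‖U − γ∘V‖²_G] + ε‖A‖²_{HS}. -/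
/-!
Put `M = C_{UV} R_ε` and `Z = U − M V`. The identity `M (C_V + ε) = C_{UV}` says exactly that
`Cov(Z, V) = ε M`, the regularised normal equation. Expand the risk of `v ↦ b + A v` around
`v ↦ μ_U + M (v − μ_V)` and write `D = A − M`. By the trace formula
`E⟪Z − E Z, D (V − E V)⟫ = ⟨Cov(Z, V), D⟩_HS = ε ⟨M, D⟩_HS`, so the cross term of the
expectation cancels the cross term `2ε ⟨M, D⟩_HS` of the penalty. What remains is the optimal
risk plus `E‖D (V − E V)‖² + ‖μ_U − A μ_V − b‖² + ε ‖D‖²_HS`, which is nonnegative and vanishes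
only when `D = 0` and `b = μ_U − M μ_V`.
-/

open MeasureTheory

noncomputable section

variable {Ω : Type*} [MeasurableSpace Ω]

open scoped RealInnerProductSpace

theorem Orthonormal.countable {E ι : Type*} [NormedAddCommGroup E] [InnerProductSpace ℝ E]
    [SecondCountableTopology E] {v : ι → E} (hv : Orthonormal ℝ v) : Countable ι := by
  refine Pairwise.countable_of_isOpen_disjoint (s := fun i => Metric.ball (v i) (1 / 2))
    (fun i j hij => Metric.ball_disjoint_ball ?_) (fun _ => Metric.isOpen_ball)
    (fun i => ⟨v i, Metric.mem_ball_self (by norm_num)⟩)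
  have hsq : dist (v i) (v j) ^ 2 = 2 := by
    rw [dist_eq_norm, norm_sub_sq_real, hv.1 i, hv.1 j, hv.2 hij]
    norm_num
  nlinarith [dist_nonneg (x := v i) (y := v j)]

section SquareSummable

variable {ι E : Type*} [NormedAddCommGroup E] [InnerProductSpace ℝ E] {f g : ι → E}

theorem summable_inner_of_summable_norm_sq (hf : Summable fun i => ‖f i‖ ^ 2)
    (hg : Summable fun i => ‖g i‖ ^ 2) : Summable fun i => ⟪f i, g i⟫ := by
  refine .of_norm_bounded ((hf.add hg).mul_left (1 / 2)) fun i => ?_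
  have := abs_real_inner_le_norm (f i) (g i)
  rw [Real.norm_eq_abs]
  nlinarith [sq_nonneg (‖f i‖ - ‖g i‖)]

theorem summable_norm_add_sq (hf : Summable fun i => ‖f i‖ ^ 2)
    (hg : Summable fun i => ‖g i‖ ^ 2) : Summable fun i => ‖f i + g i‖ ^ 2 := by
  simp_rw [norm_add_sq_real]
  exact (hf.add ((summable_inner_of_summable_norm_sq hf hg).mul_left 2)).add hg

theorem tsum_norm_add_sq (hf : Summable fun i => ‖f i‖ ^ 2)
    (hg : Summable fun i => ‖g i‖ ^ 2) :
    ∑' i, ‖f i + g i‖ ^ 2 = ∑' i, ‖f i‖ ^ 2 + 2 * ∑' i, ⟪f i, g i⟫ + ∑' i, ‖g i‖ ^ 2 := by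
  have hfg := summable_inner_of_summable_norm_sq hf hg
  simp_rw [norm_add_sq_real]
  rw [(hf.add (hfg.mul_left 2)).tsum_add hg, hf.tsum_add (hfg.mul_left 2), tsum_mul_left]

theorem summable_norm_sub_sq (hf : Summable fun i => ‖f i‖ ^ 2)
    (hg : Summable fun i => ‖g i‖ ^ 2) : Summable fun i => ‖f i - g i‖ ^ 2 := by
  simpa [sub_eq_add_neg] using summable_norm_add_sq hf (g := fun i => -g i) (by simpa using hg)

end SquareSummable

theorem eq_zero_of_tsum_norm_sq_eq_zero {ι E : Type*} [NormedAddCommGroup E] {f : ι → E}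
    (hf : Summable fun i => ‖f i‖ ^ 2) (h : ∑' i, ‖f i‖ ^ 2 = 0) (i : ι) : f i = 0 := by
  have := congr_fun ((hasSum_zero_iff_of_nonneg fun i => sq_nonneg ‖f i‖).1 (h ▸ hf.hasSum)) i
  simpa using this

section SquareIntegrable

variable {μ : Measure Ω} {E F : Type*} [NormedAddCommGroup E] [InnerProductSpace ℝ E]
  [NormedAddCommGroup F] [InnerProductSpace ℝ F]

theorem MeasureTheory.MemLp.integrable_inner {X Y : Ω → E} (hX : MemLp X 2 μ) (hY : MemLp Y 2 μ) :
    Integrable (fun ω => ⟪X ω, Y ω⟫) μ :=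
  (L2.integrable_inner (𝕜 := ℝ) (hX.toLp X) (hY.toLp Y)).congr <| by
    filter_upwards [hX.coeFn_toLp, hY.coeFn_toLp] with ω hXω hYω
    rw [hXω, hYω]

theorem MeasureTheory.MemLp.integrable_inner_const_smul {Y : Ω → F} {X : Ω → E} (hY : MemLp Y 2 μ)
    (hX : MemLp X 2 μ) (h : F) : Integrable (fun ω => ⟪Y ω, h⟫ • X ω) μ :=
  memLp_one_iff_integrable.1 (hX.smul (hY.inner_const h))

theorem sq_integral_mul_le {f g : Ω → ℝ} (hf : MemLp f 2 μ) (hg : MemLp g 2 μ) :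
    (∫ ω, f ω * g ω ∂μ) ^ 2 ≤ (∫ ω, f ω ^ 2 ∂μ) * ∫ ω, g ω ^ 2 ∂μ := by
  have hinner : ∀ {u v : Ω → ℝ} (hu : MemLp u 2 μ) (hv : MemLp v 2 μ),
      ⟪hu.toLp u, hv.toLp v⟫ = ∫ ω, u ω * v ω ∂μ := fun hu hv => by
    rw [L2.inner_def]
    refine integral_congr_ae ?_
    filter_upwards [hu.coeFn_toLp, hv.coeFn_toLp] with ω huω hvω
    rw [huω, hvω, Real.inner_apply]
  have := real_inner_mul_inner_self_le (hf.toLp f) (hg.toLp g)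
  rw [hinner hf hg, hinner hf hf, hinner hg hg] at this
  simpa only [sq] using this

theorem integral_norm_sub_sq {X Y : Ω → E} (hX : MemLp X 2 μ) (hY : MemLp Y 2 μ) :
    ∫ ω, ‖X ω - Y ω‖ ^ 2 ∂μ =
      ∫ ω, ‖X ω‖ ^ 2 ∂μ - 2 * ∫ ω, ⟪X ω, Y ω⟫ ∂μ + ∫ ω, ‖Y ω‖ ^ 2 ∂μ := by
  have hX2 := (memLp_two_iff_integrable_sq_norm hX.1).1 hX
  have hY2 := (memLp_two_iff_integrable_sq_norm hY.1).1 hY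
  have hXY := (hX.integrable_inner hY).const_mul 2
  simp_rw [norm_sub_sq_real]
  have hXXY : Integrable (fun ω => ‖X ω‖ ^ 2 - 2 * ⟪X ω, Y ω⟫) μ := hX2.sub hXY
  rw [integral_add hXXY hY2, integral_sub hX2 hXY, integral_const_mul]

theorem MeasureTheory.MemLp.sub_integral [IsFiniteMeasure μ] {p : ENNReal} {X : Ω → E}
    (hX : MemLp X p μ) : MemLp (fun ω => X ω - ∫ ω', X ω' ∂μ) p μ :=
  hX.sub (memLp_const _)

end SquareIntegrable

section Orthonormal

variable {μ : Measure Ω} {ι E F : Type*} [NormedAddCommGroup E] [InnerProductSpace ℝ E]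
  [NormedAddCommGroup F] [InnerProductSpace ℝ F] {v : ι → F}

theorem Orthonormal.summable_integral_inner_sq (hv : Orthonormal ℝ v) {Y : Ω → F}
    (hY : MemLp Y 2 μ) : Summable fun i => ∫ ω, ⟪Y ω, v i⟫ ^ 2 ∂μ := by
  have hint : ∀ i, Integrable (fun ω => ⟪Y ω, v i⟫ ^ 2) μ :=
    fun i => (hY.inner_const (v i)).integrable_sq
  refine summable_of_sum_le (c := ∫ ω, ‖Y ω‖ ^ 2 ∂μ)
    (fun i => integral_nonneg fun ω => sq_nonneg _) fun s => ?_
  rw [← integral_finsetSum s fun i _ => hint i]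
  refine integral_mono (integrable_finsetSum s fun i _ => hint i)
    ((memLp_two_iff_integrable_sq_norm hY.1).1 hY) fun ω => ?_
  simpa [real_inner_comm] using hv.sum_inner_products_le (s := s) (Y ω)

theorem norm_integral_inner_smul_sq_le {Y : Ω → F} {X : Ω → E} (hY : MemLp Y 2 μ)
    (hX : MemLp X 2 μ) (h : F) :
    ‖∫ ω, ⟪Y ω, h⟫ • X ω ∂μ‖ ^ 2 ≤ (∫ ω, ⟪Y ω, h⟫ ^ 2 ∂μ) * ∫ ω, ‖X ω‖ ^ 2 ∂μ := by
  have hnorm : ‖∫ ω, ⟪Y ω, h⟫ • X ω ∂μ‖ ≤ ∫ ω, |⟪Y ω, h⟫| * ‖X ω‖ ∂μ :=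
    (norm_integral_le_integral_norm _).trans_eq <| by simp only [norm_smul, Real.norm_eq_abs]
  calc ‖∫ ω, ⟪Y ω, h⟫ • X ω ∂μ‖ ^ 2 ≤ (∫ ω, |⟪Y ω, h⟫| * ‖X ω‖ ∂μ) ^ 2 := by gcongr
    _ ≤ (∫ ω, |⟪Y ω, h⟫| ^ 2 ∂μ) * ∫ ω, ‖X ω‖ ^ 2 ∂μ :=
      sq_integral_mul_le (hY.inner_const h).abs hX.norm
    _ = (∫ ω, ⟪Y ω, h⟫ ^ 2 ∂μ) * ∫ ω, ‖X ω‖ ^ 2 ∂μ := by simp only [sq_abs]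

/-- Bessel's inequality makes `h ↦ E[⟪Y, h⟫ X]` a Hilbert–Schmidt operator. -/
theorem Orthonormal.summable_norm_integral_inner_smul_sq (hv : Orthonormal ℝ v) {Y : Ω → F}
    {X : Ω → E} (hY : MemLp Y 2 μ) (hX : MemLp X 2 μ) :
    Summable fun i => ‖∫ ω, ⟪Y ω, v i⟫ • X ω ∂μ‖ ^ 2 :=
  .of_nonneg_of_le (fun _ => sq_nonneg _) (fun i => norm_integral_inner_smul_sq_le hY hX (v i))
    ((hv.summable_integral_inner_sq hY).mul_right _)

end Orthonormal

section HilbertBasis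

variable {μ : Measure Ω} {ι E F : Type*} [NormedAddCommGroup E] [InnerProductSpace ℝ E]
  [CompleteSpace E] [NormedAddCommGroup F] [InnerProductSpace ℝ F] [CompleteSpace F]
  (e : HilbertBasis ι ℝ F)

theorem HilbertBasis.inner_apply_eq_tsum (A : F →L[ℝ] E) (x : E) (y : F) :
    ⟪x, A y⟫ = ∑' i, ⟪y, e i⟫ * ⟪x, A (e i)⟫ := by
  rw [← A.adjoint_inner_left, ← e.tsum_inner_mul_inner]
  refine tsum_congr fun i => ?_
  rw [A.adjoint_inner_left, real_inner_comm (e i), mul_comm]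

/-- Trace formula `E⟪X, A Y⟫ = ⟨E[Y ⊗ X], A⟩_HS` for a Hilbert–Schmidt operator `A`. -/
theorem HilbertBasis.integral_inner_apply_eq_tsum [Countable ι] {Y : Ω → F} {X : Ω → E}
    (hY : MemLp Y 2 μ) (hX : MemLp X 2 μ) (A : F →L[ℝ] E)
    (hA : Summable fun i => ‖A (e i)‖ ^ 2) :
    ∫ ω, ⟪X ω, A (Y ω)⟫ ∂μ = ∑' i, ⟪∫ ω, ⟪Y ω, e i⟫ • X ω ∂μ, A (e i)⟫ := by
  set f : ι → Ω → ℝ := fun i ω => ⟪Y ω, e i⟫ * ⟪X ω, A (e i)⟫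
  have hint : ∀ i, Integrable (f i) μ := fun i =>
    (hY.inner_const (e i)).integrable_mul (hX.inner_const (A (e i)))
  have hX2 : Integrable (fun ω => ‖X ω‖ ^ 2) μ := (memLp_two_iff_integrable_sq_norm hX.1).1 hX
  -- `|a b| ≤ (a² + b²) / 2`, with `b² ≤ ‖X‖² ‖A eᵢ‖²`
  have hbound : ∀ i, ∫ ω, ‖f i ω‖ ∂μ ≤
      (∫ ω, ⟪Y ω, e i⟫ ^ 2 ∂μ) / 2 + ‖A (e i)‖ ^ 2 * (∫ ω, ‖X ω‖ ^ 2 ∂μ) / 2 := by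
    intro i
    have hY2 := (hY.inner_const (e i)).integrable_sq
    rw [← integral_div, ← integral_const_mul, ← integral_div, ← integral_add (hY2.div_const _)
      ((hX2.const_mul _).div_const _)]
    refine integral_mono (hint i).norm ((hY2.div_const _).add ((hX2.const_mul _).div_const _))
      fun ω => ?_
    have hCS : |⟪X ω, A (e i)⟫| ≤ ‖X ω‖ * ‖A (e i)‖ := abs_real_inner_le_norm _ _

    simp only [f, Real.norm_eq_abs, abs_mul]
    nlinarith [sq_nonneg (|⟪Y ω, e i⟫| - |⟪X ω, A (e i)⟫|), sq_abs ⟪Y ω, e i⟫,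
      sq_abs ⟪X ω, A (e i)⟫, abs_nonneg ⟪X ω, A (e i)⟫]
  have hsum : Summable fun i => ∫ ω, ‖f i ω‖ ∂μ :=
    .of_nonneg_of_le (fun i => integral_nonneg fun ω => norm_nonneg _) hbound
      (((e.orthonormal.summable_integral_inner_sq hY).div_const 2).add
        ((hA.mul_right _).div_const 2))
  calc ∫ ω, ⟪X ω, A (Y ω)⟫ ∂μ = ∫ ω, ∑' i, f i ω ∂μ := by
        simp only [f, ← e.inner_apply_eq_tsum]
    _ = ∑' i, ∫ ω, f i ω ∂μ := (integral_tsum_of_summable_integral_norm hint hsum).symm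
    _ = ∑' i, ⟪∫ ω, ⟪Y ω, e i⟫ • X ω ∂μ, A (e i)⟫ := tsum_congr fun i => by
        simp only [f, ← real_inner_smul_left, real_inner_comm (A (e i))]
        exact integral_inner (hY.integrable_inner_const_smul hX (e i)) _

end HilbertBasis

section Covariance

variable {μ : Measure Ω} {ι E F : Type*} [NormedAddCommGroup E] [InnerProductSpace ℝ E]
  [CompleteSpace E] [NormedAddCommGroup F] [InnerProductSpace ℝ F] [CompleteSpace F]

theorem cov_comp_right {F' : Type*} [NormedAddCommGroup F'] [InnerProductSpace ℝ F']
    [CompleteSpace F'] (X : Ω → E) {Y : Ω → F'} (hY : Integrable Y μ) (L : F' →L[ℝ] F) (h : F) :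
    cov μ X (fun ω => L (Y ω)) h = cov μ X Y (L.adjoint h) := by
  simp only [cov, L.integral_comp_comm hY, ← map_sub, L.adjoint_inner_right]

variable [IsProbabilityMeasure μ]

theorem integral_sub_integral_eq_zero {X : Ω → E} (hX : Integrable X μ) :
    ∫ ω, (X ω - ∫ ω', X ω' ∂μ) ∂μ = 0 := by
  simp [integral_sub hX (integrable_const _)]

theorem integral_norm_sub_const_sq {X : Ω → E} (hX : MemLp X 2 μ) (c : E) :
    ∫ ω, ‖X ω - c‖ ^ 2 ∂μ =
      ∫ ω, ‖X ω - ∫ ω', X ω' ∂μ‖ ^ 2 ∂μ + ‖(∫ ω, X ω ∂μ) - c‖ ^ 2 := by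
  set m := ∫ ω, X ω ∂μ
  have hXc : MemLp (fun ω => X ω - m) 2 μ := hX.sub_integral
  have hcross : ∫ ω, ⟪X ω - m, c - m⟫ ∂μ = 0 := by
    simp_rw [real_inner_comm (c - m)]
    rw [integral_inner (hXc.integrable one_le_two), integral_sub_integral_eq_zero
      (hX.integrable one_le_two), inner_zero_right]
  calc ∫ ω, ‖X ω - c‖ ^ 2 ∂μ = ∫ ω, ‖(X ω - m) - (c - m)‖ ^ 2 ∂μ := by simp
    _ = _ := by
      rw [integral_norm_sub_sq hXc (memLp_const (c - m)), hcross, integral_const, norm_sub_rev]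
      simp

theorem cov_sub_comp_left {E' : Type*} [NormedAddCommGroup E'] [InnerProductSpace ℝ E']
    [CompleteSpace E'] {X : Ω → E} {Z : Ω → E'} {Y : Ω → F} (hX : MemLp X 2 μ)
    (hZ : MemLp Z 2 μ) (hY : MemLp Y 2 μ) (L : E' →L[ℝ] E) (h : F) :
    cov μ (fun ω => X ω - L (Z ω)) Y h = cov μ X Y h - L (cov μ Z Y h) := by
  have hXc := hY.sub_integral.integrable_inner_const_smul hX.sub_integral h
  have hZc := hY.sub_integral.integrable_inner_const_smul hZ.sub_integral h
  simp only [cov]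
  rw [← L.integral_comp_comm hZc, ← integral_sub hXc (L.integrable_comp hZc),
    integral_sub (hX.integrable one_le_two) (L.integrable_comp (hZ.integrable one_le_two)),
    L.integral_comp_comm (hZ.integrable one_le_two)]
  congr 1 with ω
  simp only [map_smul, map_sub, smul_sub]
  abel

theorem Orthonormal.summable_norm_sq_cov {v : ι → F} (hv : Orthonormal ℝ v) {X : Ω → E}
    {Y : Ω → F} (hX : MemLp X 2 μ) (hY : MemLp Y 2 μ) :
    Summable fun i => ‖cov μ X Y (v i)‖ ^ 2 :=
  hv.summable_norm_integral_inner_smul_sq hY.sub_integral hX.sub_integral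

theorem Orthonormal.summable_norm_sq_cov_apply {F' : Type*} [NormedAddCommGroup F']
    [InnerProductSpace ℝ F'] [CompleteSpace F'] {v : ι → F} (hv : Orthonormal ℝ v) {X : Ω → E}
    {Y : Ω → F'} (hX : MemLp X 2 μ) (hY : MemLp Y 2 μ) (L : F →L[ℝ] F') :
    Summable fun i => ‖cov μ X Y (L (v i))‖ ^ 2 := by
  have hLY : MemLp (fun ω => L.adjoint (Y ω)) 2 μ := L.adjoint.comp_memLp' hY
  simpa only [cov_comp_right X (hY.integrable one_le_two), L.adjoint_adjoint]
    using hv.summable_norm_sq_cov hX hLY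

theorem HilbertBasis.integral_inner_sub_integral_eq_tsum_cov [Countable ι]
    (e : HilbertBasis ι ℝ F) {X : Ω → E} {Y : Ω → F} (hX : MemLp X 2 μ) (hY : MemLp Y 2 μ)
    (A : F →L[ℝ] E) (hA : Summable fun i => ‖A (e i)‖ ^ 2) :
    ∫ ω, ⟪X ω - ∫ ω', X ω' ∂μ, A (Y ω - ∫ ω', Y ω' ∂μ)⟫ ∂μ =
      ∑' i, ⟪cov μ X Y (e i), A (e i)⟫ :=
  e.integral_inner_apply_eq_tsum hY.sub_integral hX.sub_integral A hA

end Covariance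

section RegularizedRisk

variable {μ : Measure Ω} [IsProbabilityMeasure μ] {ι G H : Type*}
  [NormedAddCommGroup G] [InnerProductSpace ℝ G] [CompleteSpace G]
  [NormedAddCommGroup H] [InnerProductSpace ℝ H] [CompleteSpace H]

theorem integral_norm_sub_apply_sub_const_sq {Z : Ω → G} {Y : Ω → H} (hZ : MemLp Z 2 μ)
    (hY : MemLp Y 2 μ) (D : H →L[ℝ] G) (b : G) :
    ∫ ω, ‖Z ω - D (Y ω) - b‖ ^ 2 ∂μ =
      ∫ ω, ‖Z ω - ∫ ω', Z ω' ∂μ‖ ^ 2 ∂μ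
        - 2 * ∫ ω, ⟪Z ω - ∫ ω', Z ω' ∂μ, D (Y ω - ∫ ω', Y ω' ∂μ)⟫ ∂μ
        + ∫ ω, ‖D (Y ω - ∫ ω', Y ω' ∂μ)‖ ^ 2 ∂μ
        + ‖(∫ ω, Z ω ∂μ) - D (∫ ω, Y ω ∂μ) - b‖ ^ 2 := by
  have hDY : MemLp (fun ω => D (Y ω)) 2 μ := D.comp_memLp' hY
  have hmean : ∫ ω, (Z ω - D (Y ω)) ∂μ = (∫ ω, Z ω ∂μ) - D (∫ ω, Y ω ∂μ) := by
    rw [integral_sub (hZ.integrable one_le_two) (hDY.integrable one_le_two),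
      D.integral_comp_comm (hY.integrable one_le_two)]
  have hDYc : MemLp (fun ω => D (Y ω - ∫ ω', Y ω' ∂μ)) 2 μ := D.comp_memLp' hY.sub_integral
  rw [integral_norm_sub_const_sq (X := fun ω => Z ω - D (Y ω)) (hZ.sub hDY) b, hmean,
    ← integral_norm_sub_sq hZ.sub_integral hDYc]
  congr 2 with ω
  rw [map_sub, sub_sub_sub_comm]

theorem cov_sub_apply_eq_smul {U : Ω → G} {V : Ω → H} (hU : MemLp U 2 μ) (hV : MemLp V 2 μ)
    {CV : H →L[ℝ] H} {CUV M : H →L[ℝ] G} {ε : ℝ} (hCV : ∀ h, CV h = cov μ V V h)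
    (hCUV : ∀ h, CUV h = cov μ U V h)
    (hM : M.comp (CV + ε • ContinuousLinearMap.id ℝ H) = CUV) (h : H) :
    cov μ (fun ω => U ω - M (V ω)) V h = ε • M h := by
  have hMh : M (CV h) + ε • M h = CUV h := by
    simpa using congr($hM h)
  rw [cov_sub_comp_left hU hV hV, ← hCUV, ← hCV, ← hMh, add_sub_cancel_left]

-- `∑'` is `0` when `A` is not Hilbert–Schmidt, so statements about `regRisk` assume summability.
variable (μ) in
def regRisk (e : HilbertBasis ι ℝ H) (ε : ℝ) (U : Ω → G) (V : Ω → H) (b : G)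
    (A : H →L[ℝ] G) : ℝ :=
  ∫ ω, ‖U ω - (b + A (V ω))‖ ^ 2 ∂μ + ε * ∑' i, ‖A (e i)‖ ^ 2

section Minimizer

variable [Countable ι] (e : HilbertBasis ι ℝ H) {ε : ℝ} {U : Ω → G} {V : Ω → H} {M : H →L[ℝ] G}

theorem regRisk_eq_add (hU : MemLp U 2 μ) (hV : MemLp V 2 μ)
    (hM : Summable fun i => ‖M (e i)‖ ^ 2)
    (hnormal : ∀ h, cov μ (fun ω => U ω - M (V ω)) V h = ε • M h)
    {b : G} {A : H →L[ℝ] G} (hA : Summable fun i => ‖A (e i)‖ ^ 2) :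
    regRisk μ e ε U V b A =
      regRisk μ e ε U V ((∫ ω, U ω ∂μ) - M (∫ ω, V ω ∂μ)) M
        + (∫ ω, ‖(A - M) (V ω - ∫ ω', V ω' ∂μ)‖ ^ 2 ∂μ
          + ‖(∫ ω, U ω ∂μ) - A (∫ ω, V ω ∂μ) - b‖ ^ 2
          + ε * ∑' i, ‖(A - M) (e i)‖ ^ 2) := by
  set Z : Ω → G := fun ω => U ω - M (V ω)
  have hZ : MemLp Z 2 μ := hU.sub (M.comp_memLp' hV)
  have hmean : ∫ ω, Z ω ∂μ = (∫ ω, U ω ∂μ) - M (∫ ω, V ω ∂μ) := by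
    rw [integral_sub (hU.integrable one_le_two) (M.integrable_comp (hV.integrable one_le_two)),
      M.integral_comp_comm (hV.integrable one_le_two)]
  have hDsum : Summable fun i => ‖(A - M) (e i)‖ ^ 2 := summable_norm_sub_sq hA hM
  -- the normal equation turns the cross term of the risk into `ε ⟨M, A - M⟩_HS`
  have hcross : ∫ ω, ⟪Z ω - ∫ ω', Z ω' ∂μ, (A - M) (V ω - ∫ ω', V ω' ∂μ)⟫ ∂μ =
      ε * ∑' i, ⟪M (e i), (A - M) (e i)⟫ := by
    simp only [e.integral_inner_sub_integral_eq_tsum_cov hZ hV _ hDsum, hnormal,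
      real_inner_smul_left, tsum_mul_left]
  have hHS : ∑' i, ‖A (e i)‖ ^ 2 = ∑' i, ‖M (e i)‖ ^ 2
      + 2 * ∑' i, ⟪M (e i), (A - M) (e i)⟫ + ∑' i, ‖(A - M) (e i)‖ ^ 2 := by
    rw [← tsum_norm_add_sq hM hDsum]
    simp
  have hrisk : ∀ b' A', regRisk μ e ε U V b' A' =
      ∫ ω, ‖Z ω - (A' - M) (V ω) - b'‖ ^ 2 ∂μ + ε * ∑' i, ‖A' (e i)‖ ^ 2 := fun b' A' => by
    simp only [regRisk, Z, sub_apply, sub_sub_sub_cancel_right]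
    simp only [sub_sub, add_comm b']
  rw [hrisk, hrisk, integral_norm_sub_apply_sub_const_sq hZ hV,
    integral_norm_sub_apply_sub_const_sq hZ hV, hcross, hHS, hmean]
  simp only [sub_self, zero_apply, inner_zero_right, norm_zero, sub_zero, integral_zero,
    zero_pow two_ne_zero, sub_apply, sub_sub_sub_cancel_right]
  ring

theorem regRisk_le (hU : MemLp U 2 μ) (hV : MemLp V 2 μ)
    (hM : Summable fun i => ‖M (e i)‖ ^ 2)
    (hnormal : ∀ h, cov μ (fun ω => U ω - M (V ω)) V h = ε • M h)
    (hε : 0 ≤ ε) (b : G) {A : H →L[ℝ] G}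
    (hA : Summable fun i => ‖A (e i)‖ ^ 2) :
    regRisk μ e ε U V ((∫ ω, U ω ∂μ) - M (∫ ω, V ω ∂μ)) M ≤ regRisk μ e ε U V b A := by
  rw [regRisk_eq_add e hU hV hM hnormal hA, le_add_iff_nonneg_right]
  have : 0 ≤ ∫ ω, ‖(A - M) (V ω - ∫ ω', V ω' ∂μ)‖ ^ 2 ∂μ := integral_nonneg fun ω => sq_nonneg _
  have : 0 ≤ ∑' i, ‖(A - M) (e i)‖ ^ 2 := tsum_nonneg fun i => sq_nonneg _
  positivity

theorem eq_of_regRisk_eq (hU : MemLp U 2 μ) (hV : MemLp V 2 μ)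
    (hM : Summable fun i => ‖M (e i)‖ ^ 2)
    (hnormal : ∀ h, cov μ (fun ω => U ω - M (V ω)) V h = ε • M h)
    (hε : 0 < ε) {b : G} {A : H →L[ℝ] G}
    (hA : Summable fun i => ‖A (e i)‖ ^ 2)
    (h : regRisk μ e ε U V b A = regRisk μ e ε U V ((∫ ω, U ω ∂μ) - M (∫ ω, V ω ∂μ)) M) :
    A = M ∧ b = (∫ ω, U ω ∂μ) - M (∫ ω, V ω ∂μ) := by
  rw [regRisk_eq_add e hU hV hM hnormal hA, add_eq_left] at h
  have hDsum : Summable fun i => ‖(A - M) (e i)‖ ^ 2 := summable_norm_sub_sq hA hM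
  have hvar : 0 ≤ ∫ ω, ‖(A - M) (V ω - ∫ ω', V ω' ∂μ)‖ ^ 2 ∂μ :=
    integral_nonneg fun ω => sq_nonneg _
  have hHS : 0 ≤ ∑' i, ‖(A - M) (e i)‖ ^ 2 := tsum_nonneg fun i => sq_nonneg _
  have hbias : ‖(∫ ω, U ω ∂μ) - A (∫ ω, V ω ∂μ) - b‖ ^ 2 = 0 := by nlinarith
  have hHS0 : ∑' i, ‖(A - M) (e i)‖ ^ 2 = 0 := by nlinarith
  have hAM : A = M := by
    refine ContinuousLinearMap.ext_on (s := Set.range e)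
      (Submodule.dense_iff_topologicalClosure_eq_top.2 e.dense_span) ?_
    rintro _ ⟨i, rfl⟩
    exact sub_eq_zero.1 (eq_zero_of_tsum_norm_sq_eq_zero hDsum hHS0 i)
  subst hAM
  exact ⟨rfl, (sub_eq_zero.1 (by simpa using hbias)).symm⟩

end Minimizer

end RegularizedRisk

theorem lce_regularized_formula_general
    (μ : Measure Ω) [IsProbabilityMeasure μ]
    {G H : Type*}
    [NormedAddCommGroup G] [InnerProductSpace ℝ G] [CompleteSpace G]
    [NormedAddCommGroup H] [InnerProductSpace ℝ H] [CompleteSpace H] [SecondCountableTopology H]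
    {ι : Type*} (e : HilbertBasis ι ℝ H)
    (U : Lp G 2 μ) (V : Lp H 2 μ)
    (CV : H →L[ℝ] H) (CUV : H →L[ℝ] G)
    (hCV : ∀ h : H, CV h =
      ∫ ω, (@inner ℝ _ _ (V ω - ∫ ω', V ω' ∂μ) h) • (V ω - ∫ ω', V ω' ∂μ) ∂μ)
    (hCUV : ∀ h : H, CUV h =
      ∫ ω, (@inner ℝ _ _ (V ω - ∫ ω', V ω' ∂μ) h) • (U ω - ∫ ω', U ω' ∂μ) ∂μ)
    (ε : ℝ) (hε : 0 < ε)
    (Rε : H →L[ℝ] H)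
    (hRε₂ : Rε.comp (CV + ε • ContinuousLinearMap.id ℝ H) = ContinuousLinearMap.id ℝ H) :
    (∀ (b : G) (A : H →L[ℝ] G), Summable (fun i => ‖A (e i)‖ ^ 2) →
      (∫ ω, ‖U ω - ((∫ ω', U ω' ∂μ) + CUV (Rε (V ω - ∫ ω', V ω' ∂μ)))‖ ^ 2 ∂μ) +
          ε * ∑' i, ‖CUV (Rε (e i))‖ ^ 2 ≤
        (∫ ω, ‖U ω - (b + A (V ω))‖ ^ 2 ∂μ) + ε * ∑' i, ‖A (e i)‖ ^ 2) ∧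
    (∀ (b : G) (A : H →L[ℝ] G), Summable (fun i => ‖A (e i)‖ ^ 2) →
      (∫ ω, ‖U ω - (b + A (V ω))‖ ^ 2 ∂μ) + ε * ∑' i, ‖A (e i)‖ ^ 2 =
        (∫ ω, ‖U ω - ((∫ ω', U ω' ∂μ) + CUV (Rε (V ω - ∫ ω', V ω' ∂μ)))‖ ^ 2 ∂μ) +
          ε * ∑' i, ‖CUV (Rε (e i))‖ ^ 2 →
      ∀ v : H, b + A v = (∫ ω', U ω' ∂μ) + CUV (Rε (v - ∫ ω', V ω' ∂μ))) := by
  have := e.orthonormal.countable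
  have hU := Lp.memLp U
  have hV := Lp.memLp V
  have hM : Summable fun i => ‖CUV.comp Rε (e i)‖ ^ 2 := by
    refine (e.orthonormal.summable_norm_sq_cov_apply hU hV Rε).congr fun i => ?_
    rw [ContinuousLinearMap.comp_apply, hCUV]
    rfl
  have hnormal := cov_sub_apply_eq_smul hU hV hCV hCUV
    (M := CUV.comp Rε) (by rw [ContinuousLinearMap.comp_assoc, hRε₂, ContinuousLinearMap.comp_id])
  have hopt : (∫ ω, ‖U ω - ((∫ ω', U ω' ∂μ) + CUV (Rε (V ω - ∫ ω', V ω' ∂μ)))‖ ^ 2 ∂μ) +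
      ε * ∑' i, ‖CUV (Rε (e i))‖ ^ 2 =
      regRisk μ e ε U V ((∫ ω, U ω ∂μ) - CUV.comp Rε (∫ ω, V ω ∂μ)) (CUV.comp Rε) := by
    simp only [regRisk, ContinuousLinearMap.comp_apply, map_sub, sub_add_eq_add_sub,
      add_sub_assoc]
  refine ⟨fun b A hA => hopt ▸ regRisk_le e hU hV hM hnormal hε.le b hA, fun b A hA h v => ?_⟩
  obtain ⟨rfl, rfl⟩ := eq_of_regRisk_eq e hU hV hM hnormal hε hA (h.trans hopt)
  rw [ContinuousLinearMap.comp_apply, ContinuousLinearMap.comp_apply, map_sub, map_sub,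
    sub_add_eq_add_sub, add_sub_assoc]

/-- Regularised LCE formula: for `ε > 0`, the affine Hilbert–Schmidt map
`γ_ε(v) = μ_U + C_{UV}(C_V + ε·Id)⁻¹(v − μ_V)` is the unique minimizer, among affine maps
`γ(h) = b + A h` with `A` Hilbert–Schmidt, of the Tikhonov-regularised functional
`E[‖U − γ∘V‖²] + ε‖A‖²_HS` (the HS norm squared computed via a Hilbert basis `e` of `H`). -/
theorem lce_regularized_formula
    (μ : Measure Ω) [IsProbabilityMeasure μ]
    {G H : Type*}
    [NormedAddCommGroup G] [InnerProductSpace ℝ G] [CompleteSpace G] [SecondCountableTopology G]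
    [NormedAddCommGroup H] [InnerProductSpace ℝ H] [CompleteSpace H] [SecondCountableTopology H]
    {ι : Type*} (e : HilbertBasis ι ℝ H)
    (U : Lp G 2 μ) (V : Lp H 2 μ)
    (CV : H →L[ℝ] H) (CUV : H →L[ℝ] G)
    (hCV : ∀ h : H, CV h =
      ∫ ω, (@inner ℝ _ _ (V ω - ∫ ω', V ω' ∂μ) h) • (V ω - ∫ ω', V ω' ∂μ) ∂μ)
    (hCUV : ∀ h : H, CUV h =
      ∫ ω, (@inner ℝ _ _ (V ω - ∫ ω', V ω' ∂μ) h) • (U ω - ∫ ω', U ω' ∂μ) ∂μ)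
    (ε : ℝ) (hε : 0 < ε)
    (Rε : H →L[ℝ] H)
    (hRε₁ : (CV + ε • ContinuousLinearMap.id ℝ H).comp Rε = ContinuousLinearMap.id ℝ H)
    (hRε₂ : Rε.comp (CV + ε • ContinuousLinearMap.id ℝ H) = ContinuousLinearMap.id ℝ H) :
    (∀ (b : G) (A : H →L[ℝ] G), Summable (fun i => ‖A (e i)‖ ^ 2) →
      (∫ ω, ‖U ω - ((∫ ω', U ω' ∂μ) + CUV (Rε (V ω - ∫ ω', V ω' ∂μ)))‖ ^ 2 ∂μ) +
          ε * ∑' i, ‖CUV (Rε (e i))‖ ^ 2 ≤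
        (∫ ω, ‖U ω - (b + A (V ω))‖ ^ 2 ∂μ) + ε * ∑' i, ‖A (e i)‖ ^ 2) ∧
    (∀ (b : G) (A : H →L[ℝ] G), Summable (fun i => ‖A (e i)‖ ^ 2) →
      (∫ ω, ‖U ω - (b + A (V ω))‖ ^ 2 ∂μ) + ε * ∑' i, ‖A (e i)‖ ^ 2 =
        (∫ ω, ‖U ω - ((∫ ω', U ω' ∂μ) + CUV (Rε (V ω - ∫ ω', V ω' ∂μ)))‖ ^ 2 ∂μ) +
          ε * ∑' i, ‖CUV (Rε (e i))‖ ^ 2 →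
      ∀ v : H, b + A v = (∫ ω', U ω' ∂μ) + CUV (Rε (v - ∫ ω', V ω' ∂μ))) :=
  lce_regularized_formula_general μ e U V CV CUV hCV hCUV ε hε Rε hRε₂
end
end
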